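/- Let Y = D ∪ {y₀} be the one-point Lindelöfication of an uncountable discrete set D (neighborhoods of y₀ are co-countable). Then the group C_p(Y, 𝕋) of continuous 𝕋-valued functions on Y with the topology of pointwise convergence is topologically isomorphic to 𝕋 × Σ𝕋^D, where Σ𝕋^D is the Σ-product of D copies of 𝕋 inside 𝕋^D. -/

import Mathlib

open Pointwise Function

noncomputable section

/-- The canonical evaluation homomorphism of a topological abelian group into its
Pontryagin bidual, `x ↦ (χ ↦ χ x)`. -/
noncomputable def pontryaginEval (G : Type*) [CommGroup G] [TopologicalSpace G]
    [IsTopologicalGroup G] : G →* PontryaginDual (PontryaginDual G) where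
  toFun x :=
    { toFun := fun χ => χ x
      map_one' := rfl
      map_mul' := fun _ _ => rfl
      continuous_toFun :=
        (continuous_eval_const (F := ContinuousMonoidHom G Circle) x :) }
  map_one' := ContinuousMonoidHom.ext fun χ => map_one χ
  map_mul' x y := ContinuousMonoidHom.ext fun χ => map_mul χ x y

/-- A topological group is protodiscrete (linear) if open subgroups form a
neighborhood base at the identity. -/
def Protodiscrete (G : Type*) [Group G] [TopologicalSpace G] : Prop :=
  ∀ U ∈ nhds (1 : G), ∃ V : Subgroup G, IsOpen (V : Set G) ∧ (V : Set G) ⊆ U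

/-- A topological group is precompact (totally bounded) if every neighborhood of the
identity has finitely many translates covering the group. -/
def Precompact (G : Type*) [Group G] [TopologicalSpace G] : Prop :=
  ∀ U ∈ nhds (1 : G), ∃ F : Finset G, ∀ x : G, ∃ f ∈ F, x ∈ f • U

/-- A topological abelian group is (Pontryagin) reflexive if the canonical evaluation
map into its bidual is a topological isomorphism. -/
def PontryaginReflexive (G : Type*) [CommGroup G] [TopologicalSpace G]
    [IsTopologicalGroup G] : Prop :=
  IsHomeomorph (pontryaginEval G)

/-- A subgroup is dually embedded if every continuous character of it extends to a
continuous character of the ambient group. -/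
def DuallyEmbedded {G : Type*} [CommGroup G] [TopologicalSpace G] [IsTopologicalGroup G]
    (L : Subgroup G) : Prop :=
  ∀ χ : PontryaginDual L, ∃ ψ : PontryaginDual G, ∀ x : L, ψ (x : G) = χ x

/-- The annihilator of a subset `K` of `G` in the dual group. -/
def annihilator {G : Type*} [CommGroup G] [TopologicalSpace G] [IsTopologicalGroup G]
    (K : Set G) : Subgroup (PontryaginDual G) where
  carrier := {χ | ∀ x ∈ K, χ x = 1}
  one_mem' := fun x _ => rfl
  mul_mem' := by
    intro a b ha hb x hx
    show a x * b x = 1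
    rw [ha x hx, hb x hx, one_mul]
  inv_mem' := by
    intro a ha x hx
    show (a x)⁻¹ = 1
    rw [ha x hx, inv_one]

/-- A `P`-space: every countable intersection of open sets is open. -/
def IsPSpace (X : Type*) [TopologicalSpace X] : Prop :=
  ∀ s : ℕ → Set X, (∀ n, IsOpen (s n)) → IsOpen (⋂ n, s n)

/-- A set is `Gδ`-dense if it meets every nonempty `Gδ`-set. -/
def GdeltaDense {X : Type*} [TopologicalSpace X] (s : Set X) : Prop :=
  ∀ t : ℕ → Set X, (∀ n, IsOpen (t n)) → (⋂ n, t n).Nonempty → (s ∩ ⋂ n, t n).Nonempty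

/-- The graph of a homomorphism, as a subgroup of the product. -/
def graphSubgroup {H₁ H₂ : Type*} [CommGroup H₁] [CommGroup H₂] (φ : H₁ →* H₂) :
    Subgroup (H₁ × H₂) where
  carrier := {p | p.2 = φ p.1}
  one_mem' := (map_one φ).symm
  mul_mem' := by
    rintro ⟨a, b⟩ ⟨c, d⟩ hb hd
    simp only [Set.mem_setOf_eq] at *
    simp [hb, hd]
  inv_mem' := by
    rintro ⟨a, b⟩ h
    simp only [Set.mem_setOf_eq] at *
    simp [h]

/-- The Σ-product of `D` copies of the circle group inside `𝕋^D`. -/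
def sigmaProd (D : Type*) : Subgroup (D → Circle) where
  carrier := {x | {d | x d ≠ 1}.Countable}
  one_mem' := by simp
  mul_mem' := by
    intro a b ha hb
    refine Set.Countable.mono ?_ (ha.union hb)
    intro d hd
    simp only [Set.mem_union, Set.mem_setOf_eq]
    by_contra h
    push_neg at h
    exact hd (by show a d * b d = 1; rw [h.1, h.2, one_mul])
  inv_mem' := by
    intro a ha
    refine Set.Countable.mono ?_ ha
    intro d hd
    simp only [Set.mem_setOf_eq] at *
    simpa [inv_eq_one] using hd

/-- The group of continuous `Circle`-valued functions on `Y`, as a subgroup of the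
product `Y → Circle`; the subspace topology is the topology of pointwise convergence. -/
def Cp (Y : Type*) [TopologicalSpace Y] : Subgroup (Y → Circle) where
  carrier := {f | Continuous f}
  one_mem' := continuous_const
  mul_mem' := fun hf hg => hf.mul hg
  inv_mem' := fun hf => hf.inv

/-- The one-point Lindelöfication of a discrete set `D`: the point `none` has the
co-countable sets as neighborhoods, all other points are isolated. -/
def Lind (D : Type*) := Option D

instance (D : Type*) : TopologicalSpace (Lind D) where
  IsOpen U := (none : Option D) ∈ U → {d : D | (some d : Option D) ∉ U}.Countable
  isOpen_univ := by intro _; exact Set.countable_empty.mono (fun _ hd => hd trivial)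
  isOpen_inter := by
    intro U V hU hV h
    refine Set.Countable.mono ?_ ((hU h.1).union (hV h.2))
    intro d hd
    simp only [Set.mem_union, Set.mem_setOf_eq] at *
    by_contra hc
    push_neg at hc
    exact hd ⟨hc.1, hc.2⟩
  isOpen_sUnion := by
    intro S hS h
    obtain ⟨U, hUS, hU⟩ := h
    refine Set.Countable.mono ?_ (hS U hUS hU)
    intro d hd
    simp only [Set.mem_setOf_eq] at *
    exact fun hdU => hd ⟨U, hUS, hdU⟩

end

/-! A map `f : Y → 𝕋` is continuous exactly when it differs from `f y₀` at only countably many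
points of `D`, which is the Σ-product condition on `f(y₀)⁻¹ · f|_D`. Hence
`f ↦ (f(y₀), f(y₀)⁻¹ · f|_D)` is a group isomorphism `C_p(Y, 𝕋) ≃ 𝕋 × Σ𝕋^D`, and it is a
homeomorphism because every coordinate of it and of its inverse is a product of coordinates. -/

open Topology

namespace Lind

variable {D : Type*}

/-- The non-isolated point `y₀`. -/
def base : Lind D := none

def of (d : D) : Lind D := some d

lemma isOpen_iff (U : Set (Lind D)) :
    IsOpen U ↔ (base ∈ U → {d : D | of d ∉ U}.Countable) :=
  Iff.rfl

lemma countable_not_mem_of_mem_nhds_base {s : Set (Lind D)} (hs : s ∈ 𝓝 base) :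
    {d : D | of d ∉ s}.Countable := by
  obtain ⟨U, hUs, hU, hbase⟩ := mem_nhds_iff.mp hs
  exact ((isOpen_iff U).mp hU hbase).mono fun d hd hds => hd (hUs hds)

/-- Into a first-countable `T₁` space, `{f base}` is a countable intersection of
neighbourhoods, each of which misses only countably many values of `f`. -/
lemma continuous_iff {X : Type*} [TopologicalSpace X] [T1Space X] [FirstCountableTopology X]
    (f : Lind D → X) :
    Continuous f ↔ {d : D | f (of d) ≠ f base}.Countable := by
  constructor
  · intro hf
    obtain ⟨u, hu⟩ := (𝓝 (f base)).exists_antitone_basis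
    have hcount : ∀ n, {d : D | of d ∉ f ⁻¹' u n}.Countable := fun n =>
      countable_not_mem_of_mem_nhds_base (hf.continuousAt.preimage_mem_nhds (hu.mem n))
    refine (Set.countable_iUnion hcount).mono fun d hd => ?_
    obtain ⟨n, hn⟩ := (hu.toHasBasis.mem_iff.mp (isOpen_ne.mem_nhds (Ne.symm hd)))
    exact Set.mem_iUnion.mpr ⟨n, fun h => hn.2 h rfl⟩
  · intro hcount
    refine continuous_def.mpr fun V _ hbase => hcount.mono ?_
    intro d hd heq
    exact hd (show f (of d) ∈ V by rwa [heq])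

end Lind

lemma mem_sigmaProd_iff {D : Type*} (x : D → Circle) :
    x ∈ sigmaProd D ↔ {d | x d ≠ 1}.Countable :=
  Iff.rfl

lemma mem_Cp_lind_iff {D : Type*} (f : Lind D → Circle) :
    f ∈ Cp (Lind D) ↔ {d : D | f (Lind.of d) ≠ f Lind.base}.Countable :=
  Lind.continuous_iff f

noncomputable def cpLindEquiv (D : Type*) : Cp (Lind D) ≃* Circle × sigmaProd D where
  toFun f := (f.1 Lind.base, ⟨fun d => (f.1 Lind.base)⁻¹ * f.1 (Lind.of d), by
    refine ((mem_Cp_lind_iff f.1).mp f.2).mono ?_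
    exact fun d hne heq => hne (inv_mul_eq_one.mpr heq.symm)⟩)
  invFun p := ⟨fun y => Option.elim y p.1 fun d => p.1 * (p.2 : D → Circle) d, by
    simpa only [mem_Cp_lind_iff, Lind.of, Lind.base, Option.elim, ne_eq, mul_eq_left]
      using (mem_sigmaProd_iff _).mp p.2.2⟩
  left_inv := by
    rintro ⟨f, hf⟩
    ext (_ | d) <;> simp [Lind.of, Lind.base]
  right_inv := by
    rintro ⟨c, x⟩
    ext d <;> simp [Lind.of, Lind.base]
  map_mul' := by
    rintro ⟨f, hf⟩ ⟨g, hg⟩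
    refine Prod.ext rfl (Subtype.ext (funext fun d => ?_))
    change (f Lind.base * g Lind.base)⁻¹ * (f (Lind.of d) * g (Lind.of d)) =
      ((f Lind.base)⁻¹ * f (Lind.of d)) * ((g Lind.base)⁻¹ * g (Lind.of d))
    rw [mul_inv, mul_mul_mul_comm]

lemma continuous_cpLindEquiv (D : Type*) : Continuous (cpLindEquiv D) :=
  have hbase : Continuous fun f : Cp (Lind D) => f.1 Lind.base :=
    (continuous_apply _).comp continuous_subtype_val
  have hof (d : D) : Continuous fun f : Cp (Lind D) => f.1 (Lind.of d) :=
    (continuous_apply _).comp continuous_subtype_val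
  continuous_prodMk.mpr ⟨hbase, (continuous_pi fun d => hbase.inv.mul (hof d)).subtype_mk _⟩

lemma continuous_cpLindEquiv_symm (D : Type*) : Continuous (cpLindEquiv D).symm := by
  refine Continuous.subtype_mk (continuous_pi fun y => ?_) _
  cases y with
  | none => exact continuous_fst
  | some d =>
    exact continuous_fst.mul ((continuous_apply d).comp (continuous_subtype_val.comp continuous_snd))

theorem statement17_general (D : Type*) :
    ∃ e : Cp (Lind D) ≃* (Circle × sigmaProd D),
      Continuous e ∧ Continuous e.symm :=
  ⟨cpLindEquiv D, continuous_cpLindEquiv D, continuous_cpLindEquiv_symm D⟩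

/-- for the one-point Lindelöfication `Y` of an uncountable discrete set
`D`, the group `C_p(Y, 𝕋)` is topologically isomorphic to `𝕋 × Σ𝕋^D`. -/
theorem statement17 (D : Type*) [Uncountable D] :
    ∃ e : Cp (Lind D) ≃* (Circle × sigmaProd D),
      Continuous e ∧ Continuous e.symm :=
  statement17_general D
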